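/- For any two symmetric positive definite d×d real matrices A and B, |A^{1/2} − B^{1/2}| ≤ sqrt(min(|A^{-1}|, |B^{-1}|)) · |A − B|, where |·| denotes the operator norm. -/

import Mathlib

open MeasureTheory
open scoped ENNReal NNReal Classical
noncomputable section
abbrev Ed (d : ℕ) := EuclideanSpace ℝ (Fin d)
def qf {d : ℕ} (M : Matrix (Fin d) (Fin d) ℝ) (x : Ed d) : ℝ :=
  ∑ i, ∑ j, M i j * x i * x j
def opNorm {d : ℕ} (M : Matrix (Fin d) (Fin d) ℝ) : ℝ :=
  sSup {r | ∃ x : Ed d, ‖x‖ = 1 ∧ r = |qf M x|}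
def psdSqrt {d : ℕ} (M : Matrix (Fin d) (Fin d) ℝ) : Matrix (Fin d) (Fin d) ℝ :=
  if h : M.PosSemidef then h.1.eigenvectorUnitary.1 * Matrix.diagonal ((↑) ∘ (√·) ∘ h.1.eigenvalues) *
    (star h.1.eigenvectorUnitary : Matrix (Fin d) (Fin d) ℝ) else 0
def W2sq {d : ℕ} (μ ν : Measure (Ed d)) : ℝ≥0∞ :=
  ⨅ π : {π : Measure (Ed d × Ed d) // π.map Prod.fst = μ ∧ π.map Prod.snd = ν},
    ∫⁻ p, (‖p.1 - p.2‖₊ : ℝ≥0∞) ^ 2 ∂π.1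
def emp {d : ℕ} (n : ℕ) (x : Fin n → Ed d) : Measure (Ed d) :=
  (n : ℝ≥0∞)⁻¹ • ∑ i, Measure.dirac (x i)
def convM {d : ℕ} (a : Ed d → Matrix (Fin d) (Fin d) ℝ) (x : Ed d) (μ : Measure (Ed d)) :
    Matrix (Fin d) (Fin d) ℝ := fun i j => ∫ y, a (x - y) i j ∂μ
def convV {d : ℕ} (b : Ed d → Ed d) (x : Ed d) (μ : Measure (Ed d)) : Ed d :=
  ∫ y, b (x - y) ∂μ

/-!
Write `S = A^{1/2}`, `T = B^{1/2}` and let `v` be a unit eigenvector of the symmetric matrix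
`S - T`, with eigenvalue `μ`. Since `S (S - T) + (S - T) T = A - B`, we get
`⟪v, (A - B) v⟫ = μ (⟪v, S v⟫ + ⟪v, T v⟫)`. Cauchy–Schwarz for the positive form of `S`, applied to
`v` and `S⁻¹ v`, gives `1 ≤ ⟪v, S v⟫ ‖S⁻¹ v‖ ≤ ⟪v, S v⟫ √|A⁻¹|`, and likewise for `T`; hence
`|μ| ≤ √(min |A⁻¹| |B⁻¹|) |A - B|`. Expanding in an eigenbasis, a bound on all eigenvalues of the
symmetric matrix `S - T` bounds its operator norm.
-/

open scoped RealInnerProductSpace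

section InnerProductSpace

variable {E : Type*} [NormedAddCommGroup E] [InnerProductSpace ℝ E]

theorem LinearMap.IsPositive.inner_mul_inner_le {S : E →ₗ[ℝ] E} (hS : S.IsPositive) (x y : E) :
    ⟪x, S y⟫ * ⟪x, S y⟫ ≤ ⟪x, S x⟫ * ⟪y, S y⟫ := by
  have hsymm : ⟪y, S x⟫ = ⟪x, S y⟫ := by rw [← hS.isSymmetric, real_inner_comm]
  have hquad : ∀ t : ℝ, 0 ≤ ⟪y, S y⟫ * (t * t) + 2 * ⟪x, S y⟫ * t + ⟪x, S x⟫ := fun t => by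
    have h := hS.inner_nonneg_right (x + t • y)
    simp only [map_add, map_smul, inner_add_left, inner_add_right, real_inner_smul_left,
      real_inner_smul_right, hsymm] at h
    linarith
  have h := discrim_le_zero hquad
  rw [discrim] at h
  nlinarith

theorem LinearMap.IsPositive.one_le_inner_mul_norm {S S' : E →ₗ[ℝ] E} (hS : S.IsPositive)
    (hSS' : Function.LeftInverse S S') {v : E} (hv : ‖v‖ = 1) : 1 ≤ ⟪v, S v⟫ * ‖S' v‖ := by
  have hcs := hS.inner_mul_inner_le v (S' v)
  rw [hSS', real_inner_self_eq_norm_sq, hv, real_inner_comm v (S' v)] at hcs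
  calc (1 : ℝ) ≤ ⟪v, S v⟫ * ⟪v, S' v⟫ := by linarith
    _ ≤ ⟪v, S v⟫ * ‖S' v‖ := by
      gcongr
      · exact hS.inner_nonneg_right v
      · simpa [hv] using real_inner_le_norm v (S' v)

theorem LinearMap.IsSymmetric.inner_comp_self_sub_comp_self_apply {S T : E →ₗ[ℝ] E}
    (hS : S.IsSymmetric) (hT : T.IsSymmetric) {v : E} {μ : ℝ} (hv : (S - T) v = μ • v) :
    ⟪v, (S ∘ₗ S - T ∘ₗ T) v⟫ = μ * (⟪v, S v⟫ + ⟪v, T v⟫) :=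
  calc ⟪v, (S ∘ₗ S - T ∘ₗ T) v⟫ = ⟪v, S ((S - T) v)⟫ + ⟪(S - T) v, T v⟫ := by
        rw [hS.sub hT]
        simp only [LinearMap.sub_apply, LinearMap.comp_apply, map_sub, inner_sub_right]
        ring
    _ = μ * (⟪v, S v⟫ + ⟪v, T v⟫) := by
        rw [hv, map_smul, real_inner_smul_right, real_inner_smul_left]
        ring

theorem LinearMap.IsSymmetric.abs_inner_le_of_forall_eigen [FiniteDimensional ℝ E]
    {T : E →ₗ[ℝ] E} (hT : T.IsSymmetric) {c : ℝ}
    (h : ∀ v μ, ‖v‖ = 1 → T v = μ • v → |μ| ≤ c) (x : E) : |⟪x, T x⟫| ≤ c * ‖x‖ ^ 2 := by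
  set b := hT.eigenvectorBasis rfl
  have hinner : ⟪x, T x⟫ = ∑ i, hT.eigenvalues rfl i * b.repr x i ^ 2 := by
    rw [← b.repr.inner_map_map, PiLp.inner_apply]
    refine Finset.sum_congr rfl fun i _ => ?_
    simp only [b, hT.eigenvectorBasis_apply_self_apply, RCLike.inner_apply, conj_trivial,
      RCLike.ofReal_real_eq_id, id_eq]
    ring
  have hnorm : ‖x‖ ^ 2 = ∑ i, b.repr x i ^ 2 := by
    rw [← b.repr.norm_map, EuclideanSpace.norm_sq_eq]
    simp
  calc |⟪x, T x⟫| ≤ ∑ i, |hT.eigenvalues rfl i| * b.repr x i ^ 2 := by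
        rw [hinner]
        refine (Finset.abs_sum_le_sum_abs _ _).trans_eq (Finset.sum_congr rfl fun i _ => ?_)
        rw [abs_mul, abs_sq]
    _ ≤ ∑ i, c * b.repr x i ^ 2 := by
        gcongr with i
        exact h _ _ (b.orthonormal.1 i) (hT.apply_eigenvectorBasis rfl i)
    _ = c * ‖x‖ ^ 2 := by rw [hnorm, Finset.mul_sum]

end InnerProductSpace

section Matrix

variable {d : ℕ}

theorem psdSqrt_posSemidef {M : Matrix (Fin d) (Fin d) ℝ} (hM : M.PosSemidef) :
    (psdSqrt M).PosSemidef := by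
  rw [psdSqrt, dif_pos hM, Matrix.star_eq_conjTranspose]
  refine Matrix.PosSemidef.mul_mul_conjTranspose_same ?_ _
  rw [Matrix.posSemidef_diagonal_iff]
  exact fun i => Real.sqrt_nonneg _

theorem psdSqrt_mul_self {M : Matrix (Fin d) (Fin d) ℝ} (hM : M.PosSemidef) :
    psdSqrt M * psdSqrt M = M := by
  have hdiag : Matrix.diagonal (((↑) ∘ (√·) ∘ hM.1.eigenvalues) : Fin d → ℝ) *
      Matrix.diagonal ((↑) ∘ (√·) ∘ hM.1.eigenvalues) =
      Matrix.diagonal (RCLike.ofReal ∘ hM.1.eigenvalues) := by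
    rw [Matrix.diagonal_mul_diagonal]
    congr 1
    funext i
    simp [Real.mul_self_sqrt (hM.eigenvalues_nonneg i)]
  have hspec := hM.1.spectral_theorem
  rw [Unitary.conjStarAlgAut_apply] at hspec
  conv_rhs => rw [hspec]
  rw [psdSqrt, dif_pos hM]
  simp only [mul_assoc]
  rw [← mul_assoc (star (hM.1.eigenvectorUnitary : Matrix (Fin d) (Fin d) ℝ)),
    Unitary.coe_star_mul_self, one_mul, ← mul_assoc (Matrix.diagonal _), hdiag]

theorem qf_eq_inner (M : Matrix (Fin d) (Fin d) ℝ) (x : Ed d) :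
    qf M x = ⟪x, M.toEuclideanLin x⟫ := by
  simp only [qf, Matrix.toLpLin_apply, PiLp.inner_apply, RCLike.inner_apply, conj_trivial,
    Matrix.mulVec, dotProduct, Finset.sum_mul]
  exact Finset.sum_congr rfl fun i _ => Finset.sum_congr rfl fun j _ => by ring

theorem qf_nonneg {M : Matrix (Fin d) (Fin d) ℝ} (hM : M.PosSemidef) (x : Ed d) : 0 ≤ qf M x :=
  qf_eq_inner M x ▸ (Matrix.isPositive_toEuclideanLin_iff.mpr hM).inner_nonneg_right x

theorem abs_qf_le_opNorm (M : Matrix (Fin d) (Fin d) ℝ) {x : Ed d} (hx : ‖x‖ = 1) :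
    |qf M x| ≤ opNorm M := by
  refine le_csSup ⟨‖Matrix.toEuclideanCLM (𝕜 := ℝ) M‖, ?_⟩ ⟨x, hx, rfl⟩
  rintro r ⟨y, hy, rfl⟩
  calc |qf M y| ≤ ‖y‖ * ‖Matrix.toEuclideanCLM (𝕜 := ℝ) M y‖ := by
        rw [qf_eq_inner]; exact abs_real_inner_le_norm _ _
    _ ≤ ‖Matrix.toEuclideanCLM (𝕜 := ℝ) M‖ := by
        simpa [hy] using (Matrix.toEuclideanCLM (𝕜 := ℝ) M).le_opNorm y

theorem opNorm_le {M : Matrix (Fin d) (Fin d) ℝ} {c : ℝ} (hc : 0 ≤ c)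
    (h : ∀ x : Ed d, ‖x‖ = 1 → |qf M x| ≤ c) : opNorm M ≤ c :=
  Real.sSup_le (fun _ ⟨x, hx, hr⟩ => hr ▸ h x hx) hc

theorem opNorm_nonneg (M : Matrix (Fin d) (Fin d) ℝ) : 0 ≤ opNorm M :=
  Real.sSup_nonneg fun _ ⟨_, _, hr⟩ => hr ▸ abs_nonneg _

theorem opNorm_le_of_forall_eigen {M : Matrix (Fin d) (Fin d) ℝ} (hM : M.IsHermitian) {c : ℝ}
    (hc : 0 ≤ c) (h : ∀ v μ, ‖v‖ = 1 → M.toEuclideanLin v = μ • v → |μ| ≤ c) :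
    opNorm M ≤ c :=
  opNorm_le hc fun x hx => by
    simpa [qf_eq_inner, hx] using
      (Matrix.isSymmetric_toEuclideanLin_iff.mpr hM).abs_inner_le_of_forall_eigen h x

theorem one_le_sqrt_opNorm_inv_mul_qf {A S : Matrix (Fin d) (Fin d) ℝ} (hA : A.PosDef)
    (hS : S.PosSemidef) (hSA : S * S = A) {v : Ed d} (hv : ‖v‖ = 1) :
    1 ≤ √(opNorm A⁻¹) * qf S v := by
  have hSunit : IsUnit S.det := by
    rw [← Matrix.isUnit_iff_isUnit_det]
    exact isUnit_of_mul_isUnit_left (hSA ▸ hA.isUnit)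
  have hinv : Function.LeftInverse S.toEuclideanLin S⁻¹.toEuclideanLin := fun x => by
    rw [← LinearMap.comp_apply, ← Matrix.toLpLin_mul_same, S.mul_nonsing_inv hSunit,
      Matrix.toLpLin_one, LinearMap.id_apply]
  have hnorm : ‖S⁻¹.toEuclideanLin v‖ ≤ √(opNorm A⁻¹) := by
    refine Real.le_sqrt_of_sq_le ?_
    calc ‖S⁻¹.toEuclideanLin v‖ ^ 2 = qf A⁻¹ v := by
          rw [← real_inner_self_eq_norm_sq, ← Matrix.isSymmetric_toEuclideanLin_iff.mpr hS.1.inv,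
            ← LinearMap.comp_apply, ← Matrix.toLpLin_mul_same, ← Matrix.mul_inv_rev, hSA,
            qf_eq_inner, real_inner_comm]
      _ ≤ opNorm A⁻¹ := (le_abs_self _).trans (abs_qf_le_opNorm _ hv)
  calc 1 ≤ qf S v * ‖S⁻¹.toEuclideanLin v‖ := by
        rw [qf_eq_inner]
        exact (Matrix.isPositive_toEuclideanLin_iff.mpr hS).one_le_inner_mul_norm hinv hv
    _ ≤ qf S v * √(opNorm A⁻¹) := by gcongr; exact qf_nonneg hS v
    _ = √(opNorm A⁻¹) * qf S v := mul_comm _ _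

theorem abs_eigenvalue_sub_le {A B S T : Matrix (Fin d) (Fin d) ℝ} (hA : A.PosDef) (hB : B.PosDef)
    (hS : S.PosSemidef) (hT : T.PosSemidef) (hSA : S * S = A) (hTB : T * T = B) {v : Ed d}
    {μ : ℝ} (hv : ‖v‖ = 1) (hμ : (S - T).toEuclideanLin v = μ • v) :
    |μ| ≤ √(min (opNorm A⁻¹) (opNorm B⁻¹)) * opNorm (A - B) := by
  have hqf : qf (A - B) v = μ * (qf S v + qf T v) := by
    rw [qf_eq_inner, qf_eq_inner, qf_eq_inner, ← hSA, ← hTB, map_sub, Matrix.toLpLin_mul_same,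
      Matrix.toLpLin_mul_same]
    rw [map_sub] at hμ
    exact (Matrix.isSymmetric_toEuclideanLin_iff.mpr hS.1).inner_comp_self_sub_comp_self_apply
      (Matrix.isSymmetric_toEuclideanLin_iff.mpr hT.1) hμ
  have hsum : 1 ≤ √(min (opNorm A⁻¹) (opNorm B⁻¹)) * (qf S v + qf T v) := by
    have hSv := one_le_sqrt_opNorm_inv_mul_qf hA hS hSA hv
    have hTv := one_le_sqrt_opNorm_inv_mul_qf hB hT hTB hv
    have hSv0 := qf_nonneg hS v
    have hTv0 := qf_nonneg hT v
    rcases min_choice (opNorm A⁻¹) (opNorm B⁻¹) with hmin | hmin <;> rw [hmin] <;>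
      nlinarith [Real.sqrt_nonneg (opNorm A⁻¹), Real.sqrt_nonneg (opNorm B⁻¹)]
  calc |μ| ≤ |μ| * (√(min (opNorm A⁻¹) (opNorm B⁻¹)) * (qf S v + qf T v)) :=
        le_mul_of_one_le_right (abs_nonneg μ) hsum
    _ = √(min (opNorm A⁻¹) (opNorm B⁻¹)) * |qf (A - B) v| := by
        rw [hqf, abs_mul, abs_of_nonneg (add_nonneg (qf_nonneg hS v) (qf_nonneg hT v))]
        ring
    _ ≤ √(min (opNorm A⁻¹) (opNorm B⁻¹)) * opNorm (A - B) := by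
        gcongr
        exact abs_qf_le_opNorm _ hv

end Matrix

theorem stmt1 {d : ℕ} (A B : Matrix (Fin d) (Fin d) ℝ)
    (hA : A.PosDef) (hB : B.PosDef) :
    opNorm (psdSqrt A - psdSqrt B) ≤
      Real.sqrt (min (opNorm A⁻¹) (opNorm B⁻¹)) * opNorm (A - B) := by
  have hsqrtA := psdSqrt_posSemidef hA.posSemidef
  have hsqrtB := psdSqrt_posSemidef hB.posSemidef
  exact opNorm_le_of_forall_eigen (hsqrtA.1.sub hsqrtB.1)
    (mul_nonneg (Real.sqrt_nonneg _) (opNorm_nonneg _)) fun _ _ hv hμ =>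
      abs_eigenvalue_sub_le hA hB hsqrtA hsqrtB (psdSqrt_mul_self hA.posSemidef)
        (psdSqrt_mul_self hB.posSemidef) hv hμ
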